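/- arXiv:math/0207119 — 3 statements merged into one kernel-verified Lean document; each statement's English description precedes it below -/
import Mathlib

section
/- Let L be a left Bol loop and let a ∈ C(L) be an element of the commutant such that a^(2k+1) = 1 for some natural number k (powers defined by a^0 = 1 and a^(m+1) = a·a^m). Then the element c = a^(k+1) satisfies c·c = a and c ∈ C(L); in particular, a has a square root lying in the commutant. -/
/-- A loop: a type with a binary operation and a two-sided neutral element,
in which the equations `a * x = b` and `y * a = b` have unique solutions. -/
class Loop' (L : Type*) extends Mul L, One L where
  one_mul : ∀ x : L, 1 * x = x
  mul_one : ∀ x : L, x * 1 = x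
  existsUnique_mul_left : ∀ a b : L, ∃! x : L, a * x = b
  existsUnique_mul_right : ∀ a b : L, ∃! y : L, y * a = b

/-- The (left) Bol identity. -/
def IsBolLoop (L : Type*) [Loop' L] : Prop :=
  ∀ x y z : L, x * (y * (x * z)) = (x * (y * x)) * z

/-- The commutant of a loop. -/
def commutant (L : Type*) [Loop' L] : Set L :=
  {a : L | ∀ x : L, a * x = x * a}

/-- Powers: `a ^ 0 = 1`, `a ^ (k+1) = a * a ^ k`. -/
def lpow {L : Type*} [Loop' L] (a : L) : ℕ → L
  | 0 => 1
  | k + 1 => a * lpow a k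

section Aux

variable {L : Type*} [Loop' L]

lemma loop_mul_left_cancel (a : L) {x y : L} (h : a * x = a * y) : x = y := by
  obtain ⟨w, _, hu⟩ := Loop'.existsUnique_mul_left a (a * y)
  exact (hu x h).trans (hu y rfl).symm

/-- Left power alternativity: `lpow a n * z` is `n`-fold iteration of `a * ·`. -/
lemma lpow_mul_eq_iterate (hBol : IsBolLoop L) (a : L) (n : ℕ) :
    ∀ z : L, lpow a n * z = (fun t => a * t)^[n] z := by
  have key : ∀ n : ℕ, (∀ z : L, lpow a n * z = (fun t => a * t)^[n] z) ∧
      (∀ z : L, lpow a (n + 1) * z = (fun t => a * t)^[n + 1] z) := by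
    intro n
    induction n with
    | zero =>
      constructor
      · intro z; simp [lpow, Loop'.one_mul]
      · intro z; simp [lpow, Loop'.mul_one]
    | succ n ih =>
      obtain ⟨h1, h2⟩ := ih
      refine ⟨h2, ?_⟩
      -- first: lpow a n * a = lpow a (n+1)
      have hpa : lpow a n * a = lpow a (n + 1) := by
        have := h1 a
        rw [this]
        have : (fun t => a * t)^[n] a = (fun t => a * t)^[n + 1] (1 : L) := by
          rw [Function.iterate_succ_apply]
          simp [Loop'.mul_one]
        rw [this, ← h2 1, Loop'.mul_one]
      intro z
      have hb := hBol a (lpow a n) z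
      -- hb : a * (lpow a n * (a * z)) = (a * (lpow a n * a)) * z
      rw [hpa] at hb
      have : lpow a (n + 1 + 1) * z = a * (lpow a n * (a * z)) := by
        rw [hb]; rfl
      rw [this, h1 (a * z)]
      rw [Function.iterate_succ_apply' ((fun t => a * t)) (n+1) z]
      rw [Function.iterate_succ_apply ((fun t => a * t)) n z]
  exact (key n).1

lemma lpow_add (hBol : IsBolLoop L) (a : L) (m n : ℕ) :
    lpow a (m + n) = lpow a m * lpow a n := by
  have h1 := lpow_mul_eq_iterate hBol a
  calc lpow a (m + n) = lpow a (m + n) * 1 := (Loop'.mul_one _).symm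
    _ = (fun t => a * t)^[m + n] 1 := h1 (m + n) 1
    _ = (fun t => a * t)^[m] ((fun t => a * t)^[n] 1) := by rw [Function.iterate_add_apply]
    _ = (fun t => a * t)^[m] (lpow a n * 1) := by rw [h1 n 1]
    _ = (fun t => a * t)^[m] (lpow a n) := by rw [Loop'.mul_one]
    _ = lpow a m * lpow a n := (h1 m _).symm

lemma sq_mem_commutant (hBol : IsBolLoop L) {b : L} (hb : b ∈ commutant L) :
    b * b ∈ commutant L := by
  intro x
  apply loop_mul_left_cancel b
  have halt : ∀ z : L, b * (b * z) = (b * b) * z := by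
    intro z
    have := hBol b 1 z
    rwa [Loop'.one_mul, Loop'.one_mul] at this
  calc b * ((b * b) * x) = b * (b * (b * x)) := (congrArg (b * ·) (halt x)).symm
    _ = (b * (b * x)) * b := hb _
    _ = (b * (x * b)) * b := by rw [hb x]
    _ = b * (x * (b * b)) := (hBol b x b).symm

lemma lpow_two_pow_mem_commutant (hBol : IsBolLoop L) {a : L} (ha : a ∈ commutant L) :
    ∀ j : ℕ, lpow a (2 ^ j) ∈ commutant L := by
  intro j
  induction j with
  | zero =>
    have : lpow a (2 ^ 0) = a := by simp [lpow, Loop'.mul_one]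
    rw [this]; exact ha
  | succ j ih =>
    have : (2 : ℕ) ^ (j + 1) = 2 ^ j + 2 ^ j := by ring
    rw [this, lpow_add hBol]
    exact sq_mem_commutant hBol ih

lemma lpow_mod (hBol : IsBolLoop L) {a : L} {n : ℕ} (hn : lpow a n = 1) (m : ℕ) :
    lpow a m = lpow a (m % n) := by
  have hmul : ∀ q : ℕ, lpow a (n * q) = 1 := by
    intro q
    induction q with
    | zero => rfl
    | succ q ih =>
      have : n * (q + 1) = n * q + n := by ring
      rw [this, lpow_add hBol, ih, hn, Loop'.mul_one]
  conv_lhs => rw [← Nat.mod_add_div m n]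
  rw [lpow_add hBol, hmul, Loop'.mul_one]

end Aux

/-- In a left Bol loop, a commutant element of odd order has a
square root lying in the commutant, namely `c = a ^ (k+1)` when `a ^ (2k+1) = 1`. -/
theorem sqrt_mem_commutant (L : Type*) [Loop' L] (hBol : IsBolLoop L)
    (a : L) (ha : a ∈ commutant L) (k : ℕ) (hk : lpow a (2 * k + 1) = 1) :
    lpow a (k + 1) * lpow a (k + 1) = a ∧ lpow a (k + 1) ∈ commutant L := by
  constructor
  · have : (k + 1) + (k + 1) = (2 * k + 1) + 1 := by ring
    calc lpow a (k + 1) * lpow a (k + 1) = lpow a ((k + 1) + (k + 1)) :=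
          (lpow_add hBol a _ _).symm
      _ = lpow a ((2 * k + 1) + 1) := by rw [this]
      _ = a * lpow a (2 * k + 1) := rfl
      _ = a * 1 := by rw [hk]
      _ = a := Loop'.mul_one a
  · -- find j with 2 ^ j ≡ k + 1 [MOD 2k+1]
    set n : ℕ := 2 * k + 1 with hn
    have hcop : Nat.Coprime 2 n := Nat.coprime_two_left.mpr ⟨k, by omega⟩
    have hd : 0 < Nat.totient n := Nat.totient_pos.mpr (by omega)
    have htot : 2 ^ Nat.totient n ≡ 1 [MOD n] := Nat.ModEq.pow_totient hcop
    set d := Nat.totient n with hdd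
    have h2d : 2 * 2 ^ (d - 1) = 2 ^ d := by
      rw [← pow_succ']
      congr 1
      omega
    have hone : (1 : ℕ) ≡ 2 * (k + 1) [MOD n] := by
      have : 2 * (k + 1) = n + 1 := by omega
      rw [this]
      calc (1 : ℕ) = 0 + 1 := by omega
        _ ≡ n + 1 [MOD n] := Nat.ModEq.add_right 1 ((Nat.modEq_zero_iff_dvd).mpr dvd_rfl).symm
    have hcong : 2 ^ (d - 1) ≡ k + 1 [MOD n] := by
      have h1 : 2 * 2 ^ (d - 1) ≡ 2 * (k + 1) [MOD n] := by
        rw [h2d]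
        exact htot.trans hone
      exact Nat.ModEq.cancel_left_of_coprime hcop.symm h1
    have heq : lpow a (2 ^ (d - 1)) = lpow a (k + 1) := by
      rw [lpow_mod hBol hk (2 ^ (d - 1)), lpow_mod hBol hk (k + 1)]
      rw [hcong]
    rw [← heq]
    exact lpow_two_pow_mem_commutant hBol ha (d - 1)
end

section
/- Let L be a left Bol loop and let a, b ∈ C(L) be elements of the commutant, where a has finite odd order, i.e., a^n = 1 for some odd positive integer n (powers defined by a^0 = 1 and a^(k+1) = a·a^k). Then the product a·b lies in C(L). -/
/-! Left translations `P = L p`, `Q = L q` by commutant elements of a left Bol loop satisfy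
`P⁻¹ Q P² = Q⁻¹ P Q²`, both sides being right multiplication by `p q`. Applied to the
commutant pairs `(p, q)`, `(p², q)` and `(p, q²)`, and using `L (p²) = P²`, this relation
forces `P` to commute with `Q⁻¹ P Q`, `Q` with `P⁻¹ Q P`, and finally `P³` with `Q`. For
commutant `c, b` this turns `L c² (c² b · x)` into `L c² (x · c² b)`, so `c² b` lies in the
commutant; since `a ^ (k+2) = a² a ^ k`, so do all powers of a commutant element `a`. If
`a ^ (2r+1) = 1`, then `a = c²` with `c = a ^ (r+1)`. -/

section GroupRelation

variable {G : Type*} [Group G] {P Q : G}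

theorem commute_conj_of_inv_mul_mul_sq_eq (h₁ : P⁻¹ * Q * P ^ 2 = Q⁻¹ * P * Q ^ 2)
    (h₂ : (P ^ 2)⁻¹ * Q * (P ^ 2) ^ 2 = Q⁻¹ * P ^ 2 * Q ^ 2) :
    Commute P (Q⁻¹ * P * Q) := by
  simp only [sq] at h₁ h₂
  have hQP : Q * (P * P) = P * (Q⁻¹ * P * Q) * Q := by
    calc Q * (P * P) = P * (P⁻¹ * Q * (P * P)) := by group
      _ = P * (Q⁻¹ * P * Q) * Q := by rw [h₁]; group
  have h : P⁻¹ * (Q⁻¹ * P * Q) * P * ((Q⁻¹ * P * Q) * Q) =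
      (Q⁻¹ * P * Q) * ((Q⁻¹ * P * Q) * Q) :=
    calc P⁻¹ * (Q⁻¹ * P * Q) * P * ((Q⁻¹ * P * Q) * Q)
        = P⁻¹ * (Q⁻¹ * P * Q) * (P * (Q⁻¹ * P * Q) * Q) := by group
      _ = P⁻¹ * (Q⁻¹ * P * Q) * (Q * (P * P)) := by rw [hQP]
      _ = P⁻¹ * P⁻¹ * (P * (Q⁻¹ * P * Q) * Q) * (P * P) := by group
      _ = P⁻¹ * P⁻¹ * (Q * (P * P)) * (P * P) := by rw [hQP]
      _ = (P * P)⁻¹ * Q * ((P * P) * (P * P)) := by group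
      _ = (Q⁻¹ * P * Q) * ((Q⁻¹ * P * Q) * Q) := by rw [h₂]; group
  calc P * (Q⁻¹ * P * Q) = P * (P⁻¹ * (Q⁻¹ * P * Q) * P) := by rw [mul_right_cancel h]
    _ = (Q⁻¹ * P * Q) * P := by group

theorem commute_pow_three_of_inv_mul_mul_sq_eq (h : P⁻¹ * Q * P ^ 2 = Q⁻¹ * P * Q ^ 2)
    (hP : Commute P (Q⁻¹ * P * Q)) (hQ : Commute Q (P⁻¹ * Q * P)) : Commute (P ^ 3) Q := by
  simp only [sq] at h
  calc P ^ 3 * Q = P * Q⁻¹ * (P * (P⁻¹ * Q * (P * P)) * Q) := by rw [pow_three]; group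
    _ = P * Q⁻¹ * (P * (Q⁻¹ * P * Q) * (Q * Q)) := by rw [h]; group
    _ = P * Q⁻¹ * ((Q⁻¹ * P * (Q * Q)) * (Q⁻¹ * P * (Q * Q))) := by rw [hP.eq]; group
    _ = P * Q⁻¹ * ((P⁻¹ * Q * P) * Q * (P * P)) := by rw [← h]; group
    _ = P * Q⁻¹ * (Q * (P⁻¹ * Q * P) * (P * P)) := by rw [hQ.eq]
    _ = Q * P ^ 3 := by rw [pow_three]; group

end GroupRelation

namespace Loop'

variable {L : Type*} [Loop' L]

theorem mul_left_bijective (x : L) : Function.Bijective (x * ·) :=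
  (Function.bijective_iff_existsUnique _).2 (existsUnique_mul_left x)

noncomputable def leftMul (x : L) : Equiv.Perm L :=
  Equiv.ofBijective _ (mul_left_bijective x)

@[simp]
theorem leftMul_apply (x u : L) : leftMul x u = x * u := rfl

theorem leftMul_one : leftMul (1 : L) = 1 :=
  Equiv.ext Loop'.one_mul

theorem leftMul_injective : Function.Injective (leftMul : L → Equiv.Perm L) := fun _ _ h => by
  simpa only [leftMul_apply, Loop'.mul_one] using congr($h 1)

end Loop'

namespace IsBolLoop

open Loop'

variable {L : Type*} [Loop' L]

theorem leftMul_mul_mul (hBol : IsBolLoop L) (x y : L) :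
    leftMul x * leftMul y * leftMul x = leftMul (x * (y * x)) :=
  Equiv.ext fun z => hBol x y z

theorem mul_self_mul (hBol : IsBolLoop L) (x z : L) : x * x * z = x * (x * z) := by
  simpa only [Loop'.one_mul] using (hBol x 1 z).symm

theorem leftMul_mul_self (hBol : IsBolLoop L) (x : L) : leftMul (x * x) = leftMul x ^ 2 :=
  Equiv.ext fun z => by simp [sq, hBol.mul_self_mul]

theorem mul_mul_mul_of_mem_commutant (hBol : IsBolLoop L) {p : L} (hp : p ∈ commutant L)
    (u z : L) : p * (u * (p * z)) = p * (p * u) * z := by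
  rw [hp u]
  exact hBol p u z

theorem mul_self_mem_commutant (hBol : IsBolLoop L) {p : L} (hp : p ∈ commutant L) :
    p * p ∈ commutant L := fun x => by
  apply (leftMul p).injective
  simp only [leftMul_apply]
  rw [hBol.mul_self_mul, hBol.mul_mul_mul_of_mem_commutant hp x p]
  exact hp _

theorem inv_leftMul_mul_leftMul_sq (hBol : IsBolLoop L) {p q : L} (hp : p ∈ commutant L)
    (hq : q ∈ commutant L) :
    (leftMul p)⁻¹ * leftMul q * leftMul p ^ 2 = (leftMul q)⁻¹ * leftMul p * leftMul q ^ 2 := by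
  ext u
  have key : ∀ {p q : L}, p ∈ commutant L → q ∈ commutant L →
      q * (p * (p * u)) = leftMul p (u * (p * q)) := fun hp hq => by
    rw [leftMul_apply, hBol.mul_mul_mul_of_mem_commutant hp]
    exact hq _
  simp only [Equiv.Perm.mul_apply, sq, leftMul_apply, Equiv.Perm.inv_def]
  rw [key hp hq, key hq hp, Equiv.symm_apply_apply, Equiv.symm_apply_apply, hp q]

theorem commute_leftMul_pow_three (hBol : IsBolLoop L) {p q : L} (hp : p ∈ commutant L)
    (hq : q ∈ commutant L) : Commute (leftMul p ^ 3) (leftMul q) := by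
  have h := hBol.inv_leftMul_mul_leftMul_sq hp hq
  have h₂ := hBol.inv_leftMul_mul_leftMul_sq (hBol.mul_self_mem_commutant hp) hq
  have h₃ := hBol.inv_leftMul_mul_leftMul_sq hp (hBol.mul_self_mem_commutant hq)
  rw [leftMul_mul_self hBol] at h₂ h₃
  exact commute_pow_three_of_inv_mul_mul_sq_eq h (commute_conj_of_inv_mul_mul_sq_eq h h₂)
    (commute_conj_of_inv_mul_mul_sq_eq h.symm h₃.symm)

theorem mul_self_mul_mem_commutant (hBol : IsBolLoop L) {c b : L} (hc : c ∈ commutant L)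
    (hb : b ∈ commutant L) : c * c * b ∈ commutant L := fun x => by
  apply (leftMul c ^ 2).injective
  have hl : c * c * b * x = (leftMul c * leftMul b * leftMul c) x := by
    rw [hBol.leftMul_mul_mul, leftMul_apply, hBol.mul_self_mul, hb c]
  have hr : c * (c * (x * (c * c * b))) = b * (c * (c * (c * (c * x)))) := by
    rw [hBol.mul_self_mul, hBol.mul_mul_mul_of_mem_commutant hc,
      hBol.mul_mul_mul_of_mem_commutant hc]
    exact (hb _).symm
  calc (leftMul c ^ 2) (c * c * b * x) = (leftMul c ^ 3 * leftMul b) (c * x) := by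
        rw [hl]; simp only [pow_three, sq, Equiv.Perm.mul_apply, leftMul_apply]
    _ = (leftMul b * leftMul c ^ 3) (c * x) := by
        rw [(hBol.commute_leftMul_pow_three hc hb).eq]
    _ = (leftMul c ^ 2) (x * (c * c * b)) := by
        simp only [pow_three, sq, Equiv.Perm.mul_apply, leftMul_apply, hr]

theorem leftMul_lpow (hBol : IsBolLoop L) {a : L} (ha : a ∈ commutant L) :
    ∀ k, leftMul (lpow a k) = leftMul a ^ k
  | 0 => leftMul_one
  | 1 => by rw [pow_one]; exact congrArg leftMul (Loop'.mul_one a)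
  | k + 2 => by
    change leftMul (a * (a * lpow a k)) = _
    rw [ha (lpow a k), ← hBol.leftMul_mul_mul, hBol.leftMul_lpow ha k, ← pow_succ', ← pow_succ]

theorem lpow_mem_commutant (hBol : IsBolLoop L) {a : L} (ha : a ∈ commutant L) :
    ∀ k, lpow a k ∈ commutant L
  | 0 => fun x => (Loop'.one_mul x).trans (Loop'.mul_one x).symm
  | 1 => by
    change a * 1 ∈ commutant L
    rwa [Loop'.mul_one]
  | k + 2 => by
    change a * (a * lpow a k) ∈ commutant L
    rw [← hBol.mul_self_mul]
    exact hBol.mul_self_mul_mem_commutant ha (hBol.lpow_mem_commutant ha k)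

end IsBolLoop

/-- In a left Bol loop, if `a` and `b` are commutant elements and `a`
has finite odd order, then `a * b` is a commutant element. -/
theorem mul_mem_commutant_of_odd_order (L : Type*) [Loop' L] (hBol : IsBolLoop L)
    (a b : L) (ha : a ∈ commutant L) (hb : b ∈ commutant L)
    (hodd : ∃ n : ℕ, Odd n ∧ 0 < n ∧ lpow a n = 1) :
    a * b ∈ commutant L := by
  obtain ⟨n, ⟨r, rfl⟩, -, hn⟩ := hodd
  have hsq : lpow a (r + 1) * lpow a (r + 1) = a := Loop'.leftMul_injective <| by
    rw [hBol.leftMul_mul_self, hBol.leftMul_lpow ha, ← pow_mul, ← hBol.leftMul_lpow ha,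
      show (r + 1) * 2 = 2 * r + 1 + 1 by ring]
    exact congrArg Loop'.leftMul ((congrArg (a * ·) hn).trans (Loop'.mul_one a))
  simpa only [hsq] using
    hBol.mul_self_mul_mem_commutant (hBol.lpow_mem_commutant ha (r + 1)) hb
end

section
/- Let L be an arbitrary loop and let B(L) = { a ∈ L : a·(x·(a·y)) = (a·(x·a))·y for all x, y ∈ L } be its set of Bol elements. Suppose every element a of B(L) ∩ C(L) has finite odd order, i.e., a^n = 1 for some odd positive integer n (powers defined by a^0 = 1 and a^(k+1) = a·a^k). Then B(L) ∩ C(L) is a subloop of L: it contains 1, is closed under multiplication, and for all a, b ∈ B(L) ∩ C(L) the unique solutions x and y of the equations a·x = b and y·a = b lie in B(L) ∩ C(L). -/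
/-- The set of Bol elements of a loop. -/
def bolElements (L : Type*) [Loop' L] : Set L :=
  {a : L | ∀ x y : L, a * (x * (a * y)) = (a * (x * a)) * y}

namespace BolAux

variable {L : Type*} [Loop' L]

theorem one_mul' (x : L) : 1 * x = x := Loop'.one_mul x
theorem mul_one' (x : L) : x * 1 = x := Loop'.mul_one x

theorem lcancel (a : L) {x y : L} (h : a * x = a * y) : x = y := by
  obtain ⟨z, -, hu⟩ := Loop'.existsUnique_mul_left a (a * y)
  rw [hu x h, hu y rfl]

section OneElt

variable {a : L} (hB : ∀ x y : L, a * (x * (a * y)) = (a * (x * a)) * y)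
  (hC : ∀ x : L, a * x = x * a)

include hB in
theorem sq_assoc (y : L) : a * (a * y) = (a * a) * y := by
  have h := hB 1 y
  rwa [one_mul', one_mul'] at h

include hB hC in
theorem F3 (z y : L) : a * (z * (a * y)) = ((a * a) * z) * y := by
  rw [hB z y, ← hC z, sq_assoc hB]

include hB hC in
theorem sq_comm (x : L) : (a * a) * x = x * (a * a) := by
  apply lcancel a
  have h := hB x a
  rw [← hC (a * (x * a)), sq_assoc hB, ← hC x, ← sq_assoc hB, sq_assoc hB x] at h
  exact h.symm

end OneElt

section TwoElt

variable {a b : L}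
  (hBa : ∀ x y : L, a * (x * (a * y)) = (a * (x * a)) * y)
  (hCa : ∀ x : L, a * x = x * a)
  (hBb : ∀ x y : L, b * (x * (b * y)) = (b * (x * b)) * y)
  (hCb : ∀ x : L, b * x = x * b)

include hBa hCa hCb in
theorem li (u : L) : a * (u * (a * b)) = b * ((a * a) * u) := by
  rw [hBa u b, ← hCa u, sq_assoc hBa, hCb ((a * a) * u)]

include hBa hCa hBb hCb in
theorem lii (u : L) : b * (u * (a * b)) = a * ((b * b) * u) := by
  rw [hCa b, hBb u a, ← hCa (b * (u * b)), ← hCb u, sq_assoc hBb]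

include hBa hCa hBb hCb in
theorem liv (x : L) : (a * x) * (a * b) = (a * a) * (b * x) := by
  apply lcancel b
  rw [lii hBa hCa hBb hCb (a * x), F3 hBa hCa (b * b) x, sq_comm hBa hCa (b * b),
    F3 hBb hCb (a * a) x]

include hBa hCa hBb hCb in
theorem lKC (y : L) : b * (a * (a * (a * y))) = a * (a * (a * (b * y))) := by
  rw [sq_assoc hBa (a * y), ← li hBa hCa hCb (a * y), liv hBa hCa hBb hCb y,
    ← sq_assoc hBa (b * y)]

include hBa hCa in
theorem lL2 (y : L) : ((a * a) * b) * y = a * (b * (a * y)) := by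
  rw [hBa b y, ← hCa b, sq_assoc hBa]

include hBa hCa hBb hCb in
theorem K_comm (x : L) : ((a * a) * b) * x = x * ((a * a) * b) := by
  apply lcancel a
  apply lcancel a
  -- left side
  have hL : a * (a * (((a * a) * b) * x)) = b * (a * (a * (a * (a * x)))) := by
    rw [lL2 hBa hCa x, lKC hBa hCa hBb hCb (a * x)]
  -- right side
  have hstep : a * (x * ((a * a) * b)) = ((a * a) * x) * (a * b) := by
    have h := hBa x (a * b)
    rw [sq_assoc hBa b, ← hCa x, sq_assoc hBa x] at h
    exact h
  have hR : a * (a * (x * ((a * a) * b))) = b * (a * (a * (a * (a * x)))) := by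
    rw [hstep, li hBa hCa hCb ((a * a) * x), ← sq_assoc hBa ((a * a) * x),
      ← sq_assoc hBa x]
  rw [hL, hR]

include hBa hCa hBb hCb in
theorem K_bol (x y : L) :
    ((a * a) * b) * (x * (((a * a) * b) * y)) = (((a * a) * b) * (x * ((a * a) * b))) * y := by
  have hw := K_comm hBa hCa hBb hCb
  -- LHS
  have hL : ((a * a) * b) * (x * (((a * a) * b) * y)) =
      ((a * a) * ((b * b) * ((a * a) * x))) * y := by
    rw [lL2 hBa hCa y, lL2 hBa hCa (x * (a * (b * (a * y)))), hBa x (b * (a * y)),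
      ← hCa x, sq_assoc hBa x, hBb ((a * a) * x) (a * y), ← hCb ((a * a) * x),
      sq_assoc hBb ((a * a) * x), F3 hBa hCa ((b * b) * ((a * a) * x)) y]
  -- RHS inner element
  have hR : ((a * a) * b) * (x * ((a * a) * b)) = (a * a) * ((b * b) * ((a * a) * x)) := by
    rw [← hw x, lL2 hBa hCa x, lL2 hBa hCa (a * (b * (a * x))), sq_assoc hBa (b * (a * x)),
      F3 hBb hCb (a * a) (a * x), F3 hBa hCa ((b * b) * (a * a)) x,
      ← sq_assoc hBa x, ← sq_assoc hBa ((b * b) * (a * (a * x))),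
      F3 hBa hCa (b * b) (a * x), F3 hBa hCa ((a * a) * (b * b)) x,
      sq_comm hBa hCa (b * b)]
  rw [hL, hR]

end TwoElt

/-- membership notation shortcut -/
def S (L : Type*) [Loop' L] : Set L := bolElements L ∩ commutant L

theorem one_mem : (1 : L) ∈ S L := by
  constructor
  · intro x y
    show (1 : L) * (x * (1 * y)) = (1 * (x * 1)) * y
    rw [one_mul', one_mul', one_mul', mul_one']
  · intro x
    show (1 : L) * x = x * 1
    rw [one_mul', mul_one']

theorem K_mem {a b : L} (ha : a ∈ S L) (hb : b ∈ S L) : (a * a) * b ∈ S L := by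
  obtain ⟨hBa, hCa⟩ := ha
  obtain ⟨hBb, hCb⟩ := hb
  exact ⟨K_bol hBa hCa hBb hCb, K_comm hBa hCa hBb hCb⟩

theorem sq_mem {a : L} (ha : a ∈ S L) : a * a ∈ S L := by
  have h := K_mem ha (one_mem (L := L))
  rwa [mul_one'] at h

section Pow

variable {a : L} (hB : ∀ x y : L, a * (x * (a * y)) = (a * (x * a)) * y)
  (hC : ∀ x : L, a * x = x * a)

include hB hC in
theorem lpow_mul (k : ℕ) : ∀ y : L, lpow a k * y = (fun z => a * z)^[k] y := by
  induction k using Nat.twoStepInduction with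
  | zero => intro y; show (1 : L) * y = y; rw [one_mul']
  | one => intro y; show (a * 1) * y = a * y; rw [mul_one']
  | more k ih _ =>
    intro y
    have h1 : lpow a (k + 2) = (a * a) * lpow a k := by
      show a * (a * lpow a k) = _
      rw [sq_assoc hB]
    rw [h1, ← F3 hB hC (lpow a k) y, ih (a * y)]
    calc a * (fun z => a * z)^[k] (a * y)
        = (fun z => a * z) ((fun z => a * z)^[k] ((fun z => a * z) y)) := rfl
      _ = (fun z => a * z)^[k + 1] ((fun z => a * z) y) :=
          (Function.iterate_succ_apply' _ k _).symm
      _ = (fun z => a * z)^[k + 2] y := (Function.iterate_succ_apply _ (k + 1) y).symm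

include hB hC in
theorem lpow_eq_iter (k : ℕ) : lpow a k = (fun z => a * z)^[k] 1 := by
  rw [← mul_one' (lpow a k), lpow_mul hB hC]

end Pow

theorem pow2_mem {a : L} (ha : a ∈ S L) (j : ℕ) : lpow a (2 ^ j) ∈ S L := by
  obtain ⟨hB, hC⟩ := id ha
  induction j with
  | zero =>
    have : lpow a (2 ^ 0) = a := by show a * 1 = a; rw [mul_one']
    rwa [this]
  | succ j ih =>
    have hsq : lpow a (2 ^ (j + 1)) = lpow a (2 ^ j) * lpow a (2 ^ j) := by
      rw [lpow_eq_iter hB hC, lpow_mul hB hC, lpow_eq_iter hB hC,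
        ← Function.iterate_add_apply]
      congr 1
      omega
    rw [hsq]
    have h := sq_mem ih
    exact h

theorem mul_mem
    (hodd : ∀ a ∈ bolElements L ∩ commutant L,
      ∃ n : ℕ, Odd n ∧ 0 < n ∧ lpow a n = 1)
    {a b : L} (ha : a ∈ S L) (hb : b ∈ S L) : a * b ∈ S L := by
  obtain ⟨hB, hC⟩ := id ha
  obtain ⟨n, hodd_n, hpos, h1⟩ := hodd a ha
  set d := Nat.totient n with hd_def
  have hd : 0 < d := Nat.totient_pos.mpr hpos
  have hcop : Nat.Coprime 2 n := Nat.coprime_two_left.mpr hodd_n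
  have heuler : 2 ^ d ≡ 1 [MOD n] := Nat.ModEq.pow_totient hcop
  have hpow1 : (1 : ℕ) ≤ 2 ^ d := Nat.one_le_two_pow
  have hdvd : n ∣ 2 ^ d - 1 := (Nat.modEq_iff_dvd' hpow1).mp heuler.symm
  obtain ⟨t, ht⟩ := hdvd
  have ht' : 2 ^ d = n * t + 1 := by omega
  have hfn : (fun z => a * z)^[n] = id := by
    funext y
    rw [← lpow_mul hB hC n y, h1, one_mul']
    rfl
  set c := lpow a (2 ^ (d - 1)) with hc_def
  have hc : c ∈ S L := pow2_mem ha (d - 1)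
  have h2d : 2 ^ (d - 1) + 2 ^ (d - 1) = 2 ^ d := by
    calc 2 ^ (d - 1) + 2 ^ (d - 1) = 2 ^ (d - 1) * 2 := (Nat.mul_two _).symm
      _ = 2 ^ (d - 1 + 1) := (pow_succ 2 (d - 1)).symm
      _ = 2 ^ d := by rw [Nat.sub_add_cancel hd]
  have hcceq : c * c = lpow a (2 ^ d) := by
    rw [hc_def, lpow_mul hB hC, lpow_eq_iter hB hC (2 ^ (d - 1)),
      ← Function.iterate_add_apply, ← lpow_eq_iter hB hC, h2d]
  have hcc : (c * c) * b = a * b := by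
    rw [hcceq, lpow_mul hB hC, ht', Function.iterate_add_apply,
      Function.iterate_mul, hfn, Function.iterate_id, Function.iterate_one]
    rfl
  have := K_mem hc hb
  rwa [hcc] at this

theorem pow_mem
    (hodd : ∀ a ∈ bolElements L ∩ commutant L,
      ∃ n : ℕ, Odd n ∧ 0 < n ∧ lpow a n = 1)
    {a : L} (ha : a ∈ S L) : ∀ k, lpow a k ∈ S L := by
  intro k
  induction k with
  | zero => exact one_mem
  | succ k ih =>
    show a * lpow a k ∈ S L
    exact mul_mem hodd ha ih

theorem ldiv_mem
    (hodd : ∀ a ∈ bolElements L ∩ commutant L,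
      ∃ n : ℕ, Odd n ∧ 0 < n ∧ lpow a n = 1)
    {a b : L} (ha : a ∈ S L) (hb : b ∈ S L) {x : L} (hx : a * x = b) :
    x ∈ S L := by
  obtain ⟨hB, hC⟩ := id ha
  obtain ⟨n, hodd_n, hpos, h1⟩ := hodd a ha
  have hx0 : a * (lpow a (n - 1) * b) = b := by
    rw [lpow_mul hB hC]
    have : a * (fun z => a * z)^[n - 1] b = (fun z => a * z)^[n - 1 + 1] b := by
      rw [Function.iterate_succ_apply']
    rw [this]
    have hn : n - 1 + 1 = n := by omega
    rw [hn, ← lpow_mul hB hC, h1, one_mul']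
  have hmem : lpow a (n - 1) * b ∈ S L := mul_mem hodd (pow_mem hodd ha (n - 1)) hb
  obtain ⟨z, -, hu⟩ := Loop'.existsUnique_mul_left a b
  rw [hu x hx, ← hu (lpow a (n - 1) * b) hx0]
  exact hmem

end BolAux

/-- In an arbitrary loop, if every element of `B(L) ∩ C(L)` has
finite odd order, then `B(L) ∩ C(L)` is a subloop. -/
theorem bol_inter_commutant_subloop (L : Type*) [Loop' L]
    (hodd : ∀ a ∈ bolElements L ∩ commutant L,
      ∃ n : ℕ, Odd n ∧ 0 < n ∧ lpow a n = 1) :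
    (1 : L) ∈ bolElements L ∩ commutant L ∧
    (∀ a ∈ bolElements L ∩ commutant L, ∀ b ∈ bolElements L ∩ commutant L,
      a * b ∈ bolElements L ∩ commutant L) ∧
    (∀ a ∈ bolElements L ∩ commutant L, ∀ b ∈ bolElements L ∩ commutant L,
      ∀ x : L, a * x = b → x ∈ bolElements L ∩ commutant L) ∧
    (∀ a ∈ bolElements L ∩ commutant L, ∀ b ∈ bolElements L ∩ commutant L,
      ∀ y : L, y * a = b → y ∈ bolElements L ∩ commutant L) := by
  refine ⟨BolAux.one_mem, fun a ha b hb => BolAux.mul_mem hodd ha hb,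
    fun a ha b hb x hx => BolAux.ldiv_mem hodd ha hb hx,
    fun a ha b hb y hy => ?_⟩
  have hC := ha.2
  have hy' : a * y = b := by rw [hC y]; exact hy
  exact BolAux.ldiv_mem hodd ha hb hy'
end
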